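/- (V increment) If T ≥ Dμ*/Δ, then for every node s, V(s, T+1) = V(s, T) + μ*. -/

import Mathlib

open Finset
open scoped ENNReal

/-- A path `p` is admissible up to time `T` if consecutive nodes are adjacent. -/
def Adm {S : Type*} (adj : S → S → Prop) (p : ℕ → S) (T : ℕ) : Prop :=
  ∀ t < T, adj (p t) (p (t + 1))

/-- Cumulative expected reward of the path `p 0, p 1, ..., p T`. -/
noncomputable def Vpath {S : Type*} (μ : S → ℝ) (p : ℕ → S) (T : ℕ) : ℝ :=
  ∑ t ∈ Finset.range (T + 1), μ (p t)

/-- Optimal `T`-step cumulative expected reward starting from node `s`. -/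
noncomputable def Vopt {S : Type*} (adj : S → S → Prop) (μ : S → ℝ) (s : S) (T : ℕ) : ℝ :=
  sSup {v | ∃ p : ℕ → S, p 0 = s ∧ Adm adj p T ∧ Vpath μ p T = v}

/-- Infinite-horizon undiscounted regret (total cost) of a stationary policy `π`
starting from node `s`, as a limit (`tsum` of the nonnegative costs). -/
noncomputable def Rinf {S : Type*} (μ : S → ℝ) (μstar : ℝ) (π : S → S) (s : S) : ℝ≥0∞ :=
  ∑' t : ℕ, ENNReal.ofReal (μstar - μ (π^[t] s))

/-- The sufficient planning horizon `T_G = ⌈D μ* / Δ⌉`. -/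
noncomputable def TG (D : ℕ) (μstar Δ : ℝ) : ℕ :=
  Nat.ceil ((D : ℝ) * μstar / Δ)

/-! If `T Δ ≥ D μ*`, every path of horizon `T` already visits an optimal node: one that never
does collects at most `(T + 1)(μ* - Δ)`, less than walking (in at most `D` steps) to an optimal
node and staying there. Repeating that visit once more, through the self-loop, turns any
`T`-path into a `(T + 1)`-path earning exactly `μ*` more, and no `(T + 1)`-path can earn more
than its `T`-prefix plus `μ*`. -/

section GraphBandit

variable {S : Type*} {adj : S → S → Prop} {μ : S → ℝ}

theorem Adm.mono {p : ℕ → S} {m n : ℕ} (h : Adm adj p n) (hmn : m ≤ n) : Adm adj p m :=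
  fun t ht => h t (ht.trans_le hmn)

theorem Vpath_succ (p : ℕ → S) (T : ℕ) : Vpath μ p (T + 1) = Vpath μ p T + μ (p (T + 1)) :=
  sum_range_succ _ _

theorem Vpath_congr {p q : ℕ → S} {T : ℕ} (h : ∀ t ≤ T, p t = q t) :
    Vpath μ p T = Vpath μ q T :=
  sum_congr rfl fun t ht => by rw [h t (Nat.lt_succ_iff.1 (mem_range.1 ht))]

theorem Vpath_nonneg (hμ0 : ∀ s, 0 ≤ μ s) (p : ℕ → S) (T : ℕ) : 0 ≤ Vpath μ p T :=
  sum_nonneg fun _ _ => hμ0 _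

theorem le_Vpath (hμ0 : ∀ s, 0 ≤ μ s) (p : ℕ → S) (T : ℕ) : μ (p T) ≤ Vpath μ p T :=
  single_le_sum (fun _ _ => hμ0 _) (self_mem_range_succ T)

theorem Vpath_le_of_forall_le {p : ℕ → S} {T : ℕ} {c : ℝ} (h : ∀ t ≤ T, μ (p t) ≤ c) :
    Vpath μ p T ≤ (T + 1) * c :=
  calc Vpath μ p T ≤ ∑ _t ∈ range (T + 1), c :=
        sum_le_sum fun t ht => h t (Nat.lt_succ_iff.1 (mem_range.1 ht))
    _ = (T + 1) * c := by simp

theorem Vpath_le_Vopt (hμ : BddAbove (Set.range μ)) {p : ℕ → S} {s : S} {T : ℕ}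
    (hp0 : p 0 = s) (hadm : Adm adj p T) : Vpath μ p T ≤ Vopt adj μ s T := by
  obtain ⟨c, hc⟩ := hμ
  refine le_csSup ⟨(T + 1) * c, ?_⟩ ⟨p, hp0, hadm, rfl⟩
  rintro _ ⟨q, -, -, rfl⟩
  exact Vpath_le_of_forall_le fun t _ => hc (Set.mem_range_self _)

theorem Vopt_le (hrefl : ∀ s, adj s s) {s : S} {T : ℕ} {c : ℝ}
    (h : ∀ p : ℕ → S, p 0 = s → Adm adj p T → Vpath μ p T ≤ c) : Vopt adj μ s T ≤ c :=
  csSup_le ⟨_, fun _ => s, rfl, fun _ _ => hrefl s, rfl⟩ fun _ ⟨p, hp0, hadm, hv⟩ =>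
    hv ▸ h p hp0 hadm

theorem Vopt_succ_le (hrefl : ∀ s, adj s s) {μstar : ℝ} (hmax : ∀ s, μ s ≤ μstar)
    (s : S) (T : ℕ) : Vopt adj μ s (T + 1) ≤ Vopt adj μ s T + μstar :=
  Vopt_le hrefl fun p hp0 hadm => by
    rw [Vpath_succ]
    exact add_le_add
      (Vpath_le_Vopt ⟨μstar, Set.forall_mem_range.2 hmax⟩ hp0 (hadm.mono T.le_succ)) (hmax _)

def stutter (p : ℕ → S) (t₀ : ℕ) : ℕ → S := fun t => if t ≤ t₀ then p t else p (t - 1)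

@[simp]
theorem stutter_zero (p : ℕ → S) (t₀ : ℕ) : stutter p t₀ 0 = p 0 := by
  simp [stutter]

theorem Adm.stutter (hrefl : ∀ s, adj s s) {p : ℕ → S} {t₀ T : ℕ} (h : Adm adj p T)
    (ht₀ : t₀ ≤ T) : Adm adj (stutter p t₀) (T + 1) := by
  intro t ht
  simp only [_root_.stutter, Nat.add_sub_cancel]
  split_ifs with h₁ h₂ h₂
  · exact h t (by omega)
  · obtain rfl : t = t₀ := by omega
    exact hrefl _
  · omega
  · obtain ⟨u, rfl⟩ : ∃ u, t = u + 1 := ⟨t - 1, by omega⟩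
    exact h u (by omega)

theorem Vpath_stutter (p : ℕ → S) {t₀ T : ℕ} (ht₀ : t₀ ≤ T) :
    Vpath μ (stutter p t₀) (T + 1) = Vpath μ p T + μ (p t₀) := by
  induction T, ht₀ using Nat.le_induction with
  | base =>
    rw [Vpath_succ, Vpath_congr (q := p) fun t ht => by simp [stutter, ht]]
    simp [stutter]
  | succ T hT ih =>
    rw [Vpath_succ, ih, Vpath_succ]
    simp only [stutter, if_neg (show ¬T + 1 + 1 ≤ t₀ by omega), Nat.add_sub_cancel]
    ring

def stopAt (p : ℕ → S) (d : ℕ) : ℕ → S := fun t => p (min t d)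

@[simp]
theorem stopAt_zero (p : ℕ → S) (d : ℕ) : stopAt p d 0 = p 0 := by
  simp [stopAt]

theorem Adm.stopAt (hrefl : ∀ s, adj s s) {p : ℕ → S} {d : ℕ} (h : Adm adj p d) (n : ℕ) :
    Adm adj (stopAt p d) n := by
  intro t _
  simp only [_root_.stopAt]
  rcases lt_or_ge t d with htd | htd
  · rw [min_eq_left htd.le, min_eq_left (by omega)]
    exact h t htd
  · rw [min_eq_right htd, min_eq_right (by omega)]
    exact hrefl _

theorem mul_le_Vpath_stopAt (hμ0 : ∀ s, 0 ≤ μ s) (p : ℕ → S) (d n : ℕ) :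
    ((n : ℝ) + 1 - d) * μ (p d) ≤ Vpath μ (stopAt p d) n := by
  rcases lt_or_ge n d with hnd | hdn
  · have hneg : (n : ℝ) + 1 - d ≤ 0 := sub_nonpos.2 (by exact_mod_cast hnd)
    exact (mul_nonpos_of_nonpos_of_nonneg hneg (hμ0 _)).trans (Vpath_nonneg hμ0 _ _)
  induction n, hdn using Nat.le_induction with
  | base =>
    simpa [stopAt] using le_Vpath hμ0 (stopAt p d) d
  | succ n hdn ih =>
    rw [Vpath_succ, stopAt, min_eq_right (by omega : d ≤ n + 1)]
    push_cast
    linarith [ih]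

theorem le_Vopt_of_reach (hrefl : ∀ s, adj s s) (hμ0 : ∀ s, 0 ≤ μ s)
    (hμ : BddAbove (Set.range μ)) {p : ℕ → S} {s : S} {d : ℕ} (hp0 : p 0 = s)
    (hadm : Adm adj p d) (n : ℕ) : ((n : ℝ) + 1 - d) * μ (p d) ≤ Vopt adj μ s n :=
  (mul_le_Vpath_stopAt hμ0 p d n).trans
    (Vpath_le_Vopt hμ (by rw [stopAt_zero, hp0]) (hadm.stopAt hrefl n))

theorem Vopt_add_le_Vopt_succ (hrefl : ∀ s, adj s s) (hμ0 : ∀ s, 0 ≤ μ s) {μstar Δ : ℝ}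
    (hmax : ∀ s, μ s ≤ μstar) (hgap : ∀ s, μ s < μstar → μ s ≤ μstar - Δ)
    {s sstar : S} (hsstar : μ sstar = μstar) {q : ℕ → S} {d T : ℕ} (hq0 : q 0 = s)
    (hqd : q d = sstar) (hadm : Adm adj q d) (hd : (d : ℝ) * μstar ≤ (T + 1) * Δ) :
    Vopt adj μ s T + μstar ≤ Vopt adj μ s (T + 1) := by
  have hμ : BddAbove (Set.range μ) := ⟨μstar, Set.forall_mem_range.2 hmax⟩
  have hreach : ((T : ℝ) + 2 - d) * μstar ≤ Vopt adj μ s (T + 1) := by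
    have := le_Vopt_of_reach hrefl hμ0 hμ hq0 hadm (T + 1)
    rw [hqd, hsstar] at this
    push_cast at this
    linarith
  rw [← le_sub_iff_add_le]
  refine Vopt_le hrefl fun p hp0 hpadm => le_sub_iff_add_le.2 ?_
  by_cases hvisit : ∃ t₀ ≤ T, μ (p t₀) = μstar
  · obtain ⟨t₀, ht₀, hpt₀⟩ := hvisit
    rw [← hpt₀, ← Vpath_stutter p ht₀]
    exact Vpath_le_Vopt hμ (by rw [stutter_zero, hp0]) (hpadm.stutter hrefl ht₀)
  · push Not at hvisit
    have hmiss : Vpath μ p T ≤ (T + 1) * (μstar - Δ) :=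
      Vpath_le_of_forall_le fun t ht => hgap _ ((hmax _).lt_of_ne (hvisit t ht))
    linarith

end GraphBandit

theorem V_increment_general {S : Type*}
    (adj : S → S → Prop) (hrefl : ∀ s, adj s s)
    (μ : S → ℝ) (hμ0 : ∀ s, 0 ≤ μ s)
    (μstar : ℝ) (hmax : ∀ s, μ s ≤ μstar) (hex : ∃ s, μ s = μstar)
    (Δ : ℝ) (hΔ : 0 < Δ) (hgap : ∀ s, μ s < μstar → μ s ≤ μstar - Δ)
    (D : ℕ)
    (hD : ∀ s s' : S, ∃ (T : ℕ) (p : ℕ → S),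
      T ≤ D ∧ p 0 = s ∧ p T = s' ∧ Adm adj p T)
    (T : ℕ) (hT : (D : ℝ) * μstar / Δ ≤ (T : ℝ)) :
    ∀ s : S, Vopt adj μ s (T + 1) = Vopt adj μ s T + μstar := by
  intro s
  obtain ⟨sstar, hsstar⟩ := hex
  obtain ⟨d, q, hdD, hq0, hqd, hadm⟩ := hD s sstar
  have hd : (d : ℝ) * μstar ≤ (T + 1) * Δ :=
    calc (d : ℝ) * μstar ≤ D * μstar :=
          mul_le_mul_of_nonneg_right (by exact_mod_cast hdD) (hsstar ▸ hμ0 sstar)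
      _ ≤ T * Δ := (div_le_iff₀ hΔ).1 hT
      _ ≤ (T + 1) * Δ := by linarith
  exact le_antisymm (Vopt_succ_le hrefl hmax s T)
    (Vopt_add_le_Vopt_succ hrefl hμ0 hmax hgap hsstar hq0 hqd hadm hd)

/-- V increment: if `T ≥ D μ* / Δ`, then `V(s, T+1) = V(s, T) + μ*` for every node. -/
theorem V_increment {S : Type*} [Fintype S] [Nonempty S]
    (adj : S → S → Prop) (hrefl : ∀ s, adj s s) (hsymm : ∀ s t, adj s t → adj t s)
    (μ : S → ℝ) (hμ0 : ∀ s, 0 ≤ μ s)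
    (μstar : ℝ) (hmax : ∀ s, μ s ≤ μstar) (hex : ∃ s, μ s = μstar)
    (Δ : ℝ) (hΔ : 0 < Δ) (hgap : ∀ s, μ s < μstar → μ s ≤ μstar - Δ)
    (D : ℕ)
    (hD : ∀ s s' : S, ∃ (T : ℕ) (p : ℕ → S),
      T ≤ D ∧ p 0 = s ∧ p T = s' ∧ Adm adj p T)
    (T : ℕ) (hT : (D : ℝ) * μstar / Δ ≤ (T : ℝ)) :
    ∀ s : S, Vopt adj μ s (T + 1) = Vopt adj μ s T + μstar :=
  V_increment_general adj hrefl μ hμ0 μstar hmax hex Δ hΔ hgap D hD T hT
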